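/- Theorem 1 (CDM): Let x_t = √(ᾱ_t) x₀ + √(1-ᾱ_t) ε_t with ε_t ~ N(0,I) independent of x₀, 0 < ᾱ_t < 1, and suppose x_{T+1} ~ N(0,I) (i.e., ᾱ_{T+1} = 0). Define F(x,t) = log q(T+1|x) - log q(t|x) where q(t|x) is the posterior probability of timestep t given the mixture sample x. Then E[ε_t | x_t = x] = √(1-ᾱ_t) · (∇_x F(x,t) + x) at every x where the relevant densities are positive, regardless of the choice of the prior π on timesteps (with π(t) > 0 for all t). -/

import Mathlib

open Real MeasureTheory

/-!
Near `x` the mixture density `p̃` cancels from the ratio of posteriors, so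
`F = log p_{T+1} - log p_t + log (π(T+1) / π(t))` and `∇F(x) = -x - ∇p_t(x) / p_t(x)`.
Differentiating the Gaussian convolution `p_t` under the integral sign (legitimate because
`r e^{-r²/2c} ≤ √c` bounds the derivative of the kernel by a multiple of `|p₀|`) gives
`-∇p_t(x) = (1-ᾱ_t)⁻¹ ∫ k_t(x, x₀) p₀(x₀) (x - √ᾱ_t x₀) dx₀`, which is
`(1-ᾱ_t)^{-1/2} p_t(x) E[ε_t | x_t = x]`.
-/

theorem mul_exp_neg_sq_div_le_sqrt {c : ℝ} (hc : 0 < c) (r : ℝ) :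
    r * exp (-r ^ 2 / (2 * c)) ≤ √c := by
  refine (le_abs_self _).trans (abs_le_sqrt ?_)
  have h_sq : exp (-r ^ 2 / (2 * c)) ^ 2 = (exp (r ^ 2 / c))⁻¹ := by
    rw [← exp_nat_mul, ← exp_neg]; congr 1; push_cast; ring
  rw [mul_pow, h_sq, ← div_eq_mul_inv, div_le_iff₀ (exp_pos _)]
  have := add_one_le_exp (r ^ 2 / c)
  calc r ^ 2 = c * (r ^ 2 / c) := by field_simp
    _ ≤ c * exp (r ^ 2 / c) := by gcongr; linarith

section GaussianKernel

open InnerProductSpace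

variable {E : Type*} [NormedAddCommGroup E] [InnerProductSpace ℝ E]

theorem norm_gaussian_mul_smul_le {c : ℝ} (hc : 0 < c) (C w : ℝ) (u : E) :
    ‖(C * exp (-‖u‖ ^ 2 / (2 * c)) * w) • u‖ ≤ |C| * √c * |w| := by
  rw [norm_smul, norm_mul, norm_mul, Real.norm_eq_abs C, Real.norm_eq_abs w,
    norm_of_nonneg (exp_pos _).le]
  calc |C| * exp (-‖u‖ ^ 2 / (2 * c)) * |w| * ‖u‖
      = |C| * |w| * (‖u‖ * exp (-‖u‖ ^ 2 / (2 * c))) := by ring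
    _ ≤ |C| * |w| * √c := by gcongr; exact mul_exp_neg_sq_div_le_sqrt hc _
    _ = |C| * √c * |w| := by ring

theorem MeasureTheory.Integrable.gaussian_mul [MeasurableSpace E] [BorelSpace E] {μ : Measure E}
    {f : E → ℝ} (hf : Integrable f μ) (C a : ℝ) {c : ℝ} (hc : 0 ≤ c) (y : E) :
    Integrable (fun x => C * exp (-‖y - a • x‖ ^ 2 / (2 * c)) * f x) μ := by
  have h_meas : Continuous fun x => C * exp (-‖y - a • x‖ ^ 2 / (2 * c)) := by fun_prop
  refine (hf.norm.const_mul |C|).mono' (h_meas.aestronglyMeasurable.mul hf.1)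
    (.of_forall fun x => ?_)
  have h_exp : exp (-‖y - a • x‖ ^ 2 / (2 * c)) ≤ 1 :=
    exp_le_one_iff.mpr (div_nonpos_of_nonpos_of_nonneg (by simp) (by positivity))
  rw [norm_mul, norm_mul, Real.norm_eq_abs C, norm_of_nonneg (exp_pos _).le]
  calc |C| * exp (-‖y - a • x‖ ^ 2 / (2 * c)) * ‖f x‖ ≤ |C| * 1 * ‖f x‖ := by gcongr
    _ = |C| * ‖f x‖ := by ring

variable [CompleteSpace E]

theorem HasGradientAt.log {f : E → ℝ} {f' y : E} (hf : HasGradientAt f f' y) (hy : f y ≠ 0) :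
    HasGradientAt (fun z => log (f z)) ((f y)⁻¹ • f') y := by
  rw [hasGradientAt_iff_hasFDerivAt] at hf ⊢
  simpa using hf.log hy

theorem HasGradientAt.sub {f g : E → ℝ} {f' g' y : E} (hf : HasGradientAt f f' y)
    (hg : HasGradientAt g g' y) : HasGradientAt (fun z => f z - g z) (f' - g') y := by
  rw [hasGradientAt_iff_hasFDerivAt] at hf hg ⊢
  rw [map_sub]
  exact hf.sub hg

theorem HasGradientAt.add_const {f : E → ℝ} {f' y : E} (hf : HasGradientAt f f' y) (r : ℝ) :
    HasGradientAt (fun z => f z + r) f' y :=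
  (hasFDerivAt_add_const_iff r).mpr hf

theorem hasGradientAt_log_const_mul_exp_neg_norm_sq_div_two {C : ℝ} (hC : 0 < C) (y : E) :
    HasGradientAt (fun z => log (C * exp (-‖z‖ ^ 2 / 2))) (-y) y := by
  have h_eq : (fun z : E => log (C * exp (-‖z‖ ^ 2 / 2))) = fun z => -(2⁻¹ * ‖z‖ ^ 2) + log C := by
    ext z; rw [log_mul hC.ne' (exp_pos _).ne', log_exp]; ring
  rw [h_eq, hasGradientAt_iff_hasFDerivAt]
  refine (((hasStrictFDerivAt_norm_sq y).hasFDerivAt.const_mul 2⁻¹).neg.add_const _).congr_fderiv ?_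
  ext u
  simp only [neg_apply, smul_apply, coe_innerSL_apply, nsmul_eq_mul, Nat.cast_ofNat, smul_eq_mul,
    map_neg, toDual_apply_apply]
  ring

theorem hasGradientAt_gaussian_mul (C w : ℝ) {c : ℝ} (v y : E) :
    HasGradientAt (fun z => C * exp (-‖z - v‖ ^ 2 / (2 * c)) * w)
      (-c⁻¹ • (C * exp (-‖y - v‖ ^ 2 / (2 * c)) * w) • (y - v)) y := by
  rw [hasGradientAt_iff_hasFDerivAt]
  simp_rw [div_eq_mul_inv]
  refine ((((hasFDerivAt_id y).sub_const v).norm_sq.neg.mul_const (2 * c)⁻¹).exp.const_mul C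
    |>.mul_const w).congr_fderiv ?_
  ext u
  simp only [id_eq, Pi.neg_apply, neg_mul, map_sub, ContinuousLinearMap.comp_id, smul_neg,
    neg_apply, smul_apply, sub_apply, coe_innerSL_apply, nsmul_eq_mul, smul_eq_mul, neg_smul,
    map_neg, map_smul, toDual_apply_apply]
  ring

variable [MeasurableSpace E] [BorelSpace E] [SecondCountableTopology E] {μ : Measure E}

theorem hasGradientAt_integral_gaussian_mul {f : E → ℝ} (hf : Integrable f μ) (C a : ℝ) {c : ℝ}
    (hc : 0 < c) (y : E) :
    HasGradientAt (fun z => ∫ x, C * exp (-‖z - a • x‖ ^ 2 / (2 * c)) * f x ∂μ)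
      (-c⁻¹ • ∫ x, (C * exp (-‖y - a • x‖ ^ 2 / (2 * c)) * f x) • (y - a • x) ∂μ) y := by
  set g : E → E → E := fun z x => -c⁻¹ • (C * exp (-‖z - a • x‖ ^ 2 / (2 * c)) * f x) • (z - a • x)
  have hg_meas : AEStronglyMeasurable (g y) μ :=
    ((hf.gaussian_mul C a hc.le y).1.smul
      (by fun_prop : Continuous fun x : E => y - a • x).aestronglyMeasurable).const_smul _
  have hg_bound : ∀ z x, ‖g z x‖ ≤ c⁻¹ * (|C| * √c * |f x|) := fun z x => by
    rw [norm_smul, norm_neg, norm_inv, Real.norm_of_nonneg hc.le]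
    gcongr
    exact norm_gaussian_mul_smul_le hc C (f x) (z - a • x)
  have h_deriv := hasFDerivAt_integral_of_dominated_of_fderiv_le
    (F' := fun z x => toDual ℝ E (g z x)) Filter.univ_mem
    (.of_forall fun z => (hf.gaussian_mul C a hc.le z).1) (hf.gaussian_mul C a hc.le y)
    ((toDual ℝ E).continuous.comp_aestronglyMeasurable hg_meas)
    (.of_forall fun x z _ => by simpa using hg_bound z x) ((hf.abs.const_mul _).const_mul _)
    (.of_forall fun x z _ => hasGradientAt_gaussian_mul C (f x) (a • x) z)
  have h_comm : ∫ x, toDual ℝ E (g y x) ∂μ = toDual ℝ E (∫ x, g y x ∂μ) :=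
    (toDual ℝ E).toContinuousLinearEquiv.integral_comp_comm _
  rwa [h_comm, integral_smul] at h_deriv

end GaussianKernel

theorem cdm_denoiser_from_classifier_general (d T : ℕ)
    (ᾱ : Fin (T + 2) → ℝ)
    -- density of the clean data x₀
    (p0 : EuclideanSpace ℝ (Fin d) → ℝ)
    (hp0_int : Integrable p0)
    -- densities of the noisy variables x_s at each timestep s
    (p : Fin (T + 2) → EuclideanSpace ℝ (Fin d) → ℝ)
    (hp : ∀ s : Fin (T + 2), s ≠ 0 → s ≠ Fin.last (T + 1) → ∀ y,
      p s y = ∫ x, (2 * π * (1 - ᾱ s)) ^ (-(d : ℝ) / 2) *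
        Real.exp (-‖y - Real.sqrt (ᾱ s) • x‖ ^ 2 / (2 * (1 - ᾱ s))) * p0 x)
    (hpT1 : ∀ y, p (Fin.last (T + 1)) y =
      (2 * π) ^ (-(d : ℝ) / 2) * Real.exp (-‖y‖ ^ 2 / 2))
    -- prior on timesteps, mixture and posterior
    (π_ : Fin (T + 2) → ℝ) (hπ_pos : ∀ s, 0 < π_ s)
    (ptilde : EuclideanSpace ℝ (Fin d) → ℝ)
    (q : Fin (T + 2) → EuclideanSpace ℝ (Fin d) → ℝ)
    (hq : ∀ s x, q s x = p s x * π_ s / ptilde x)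
    -- the fixed timestep t with 0 < ᾱ_t < 1
    (t : Fin (T + 2)) (ht0 : t ≠ 0) (htT1 : t ≠ Fin.last (T + 1))
    (hᾱt : 0 < ᾱ t ∧ ᾱ t < 1)
    -- the MMSE denoiser E[ε_t | x_t = y]
    (Eps : EuclideanSpace ℝ (Fin d) → EuclideanSpace ℝ (Fin d))
    (hEps : ∀ y, Eps y = (p t y)⁻¹ • ∫ x,
      (((2 * π * (1 - ᾱ t)) ^ (-(d : ℝ) / 2) *
        Real.exp (-‖y - Real.sqrt (ᾱ t) • x‖ ^ 2 / (2 * (1 - ᾱ t)))) * p0 x) •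
        ((Real.sqrt (1 - ᾱ t))⁻¹ • (y - Real.sqrt (ᾱ t) • x)))
    -- the classifier-based function F
    (F : EuclideanSpace ℝ (Fin d) → ℝ)
    (hF : ∀ x, F x = Real.log (q (Fin.last (T + 1)) x) - Real.log (q t x)) :
    ∀ y : EuclideanSpace ℝ (Fin d),
      0 < p t y → 0 < ptilde y → DifferentiableAt ℝ ptilde y →
      Eps y = Real.sqrt (1 - ᾱ t) • (gradient F y + y) := by
  intro y hpt_pos hptilde_pos hptilde_diff
  have hc : 0 < 1 - ᾱ t := sub_pos.mpr hᾱt.2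
  have hpt_grad := hasGradientAt_integral_gaussian_mul hp0_int
    ((2 * π * (1 - ᾱ t)) ^ (-(d : ℝ) / 2)) (√(ᾱ t)) hc y
  rw [← funext (hp t ht0 htT1)] at hpt_grad
  have hlast_pos : ∀ z, 0 < p (Fin.last (T + 1)) z := fun z => by rw [hpT1]; positivity
  have hlast_grad : HasGradientAt (fun z => log (p (Fin.last (T + 1)) z)) (-y) y := by
    simpa only [hpT1] using hasGradientAt_log_const_mul_exp_neg_norm_sq_div_two (by positivity) y
  have hF_eq : F =ᶠ[nhds y] fun z => log (p (Fin.last (T + 1)) z) - log (p t z) +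
      (log (π_ (Fin.last (T + 1))) - log (π_ t)) := by
    filter_upwards [hpt_grad.continuousAt.eventually (lt_mem_nhds hpt_pos),
      hptilde_diff.continuousAt.eventually (lt_mem_nhds hptilde_pos)] with z hpt hptilde
    rw [hF, hq, hq, log_div (mul_pos (hlast_pos z) (hπ_pos _)).ne' hptilde.ne',
      log_div (mul_pos hpt (hπ_pos _)).ne' hptilde.ne', log_mul (hlast_pos z).ne' (hπ_pos _).ne',
      log_mul hpt.ne' (hπ_pos _).ne']
    ring
  have hF_grad := ((hlast_grad.sub (hpt_grad.log hpt_pos.ne')).add_const _).congr_of_eventuallyEq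
    hF_eq
  rw [hEps y, hF_grad.gradient]
  simp_rw [smul_comm _ (√(1 - ᾱ t))⁻¹, integral_smul]
  have hsqrt : (√(1 - ᾱ t))⁻¹ = √(1 - ᾱ t) * (1 - ᾱ t)⁻¹ := by
    field_simp; rw [sq_sqrt hc.le]
  rw [hsqrt]
  module

/-- Theorem 1 (CDM): Let `x_t = √ᾱ_t x₀ + √(1-ᾱ_t) ε_t` with `ε_t ~ N(0,I)`
independent of `x₀` and `0 < ᾱ_t < 1`, and suppose `x_{T+1} ~ N(0,I)`
(`ᾱ_{T+1} = 0`).  With `F(x) = log q(T+1|x) - log q(t|x)`, where `q(s|x)` is the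
posterior probability of timestep `s` given the mixture sample `x`, the MMSE
denoiser satisfies `E[ε_t | x_t = x] = √(1-ᾱ_t) • (∇_x F(x) + x)` at every `x`
where the relevant densities are positive, regardless of the prior `π` on
timesteps (with `π s > 0` for all `s`). -/
theorem cdm_denoiser_from_classifier (d T : ℕ) (hd : 0 < d)
    (ᾱ : Fin (T + 2) → ℝ) (hᾱ0 : ᾱ 0 = 1) (hᾱT1 : ᾱ (Fin.last (T + 1)) = 0)
    -- density of the clean data x₀
    (p0 : EuclideanSpace ℝ (Fin d) → ℝ)
    (hp0_nonneg : ∀ x, 0 ≤ p0 x) (hp0_int : Integrable p0)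
    (hp0_one : ∫ x, p0 x = 1)
    -- densities of the noisy variables x_s at each timestep s
    (p : Fin (T + 2) → EuclideanSpace ℝ (Fin d) → ℝ)
    (hp0' : p 0 = p0)
    (hp : ∀ s : Fin (T + 2), s ≠ 0 → s ≠ Fin.last (T + 1) → ∀ y,
      p s y = ∫ x, (2 * π * (1 - ᾱ s)) ^ (-(d : ℝ) / 2) *
        Real.exp (-‖y - Real.sqrt (ᾱ s) • x‖ ^ 2 / (2 * (1 - ᾱ s))) * p0 x)
    (hpT1 : ∀ y, p (Fin.last (T + 1)) y =
      (2 * π) ^ (-(d : ℝ) / 2) * Real.exp (-‖y‖ ^ 2 / 2))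
    -- prior on timesteps, mixture and posterior
    (π_ : Fin (T + 2) → ℝ) (hπ_pos : ∀ s, 0 < π_ s) (hπ_sum : ∑ s, π_ s = 1)
    (ptilde : EuclideanSpace ℝ (Fin d) → ℝ)
    (hptilde : ∀ x, ptilde x = ∑ s, p s x * π_ s)
    (q : Fin (T + 2) → EuclideanSpace ℝ (Fin d) → ℝ)
    (hq : ∀ s x, q s x = p s x * π_ s / ptilde x)
    -- the fixed timestep t with 0 < ᾱ_t < 1
    (t : Fin (T + 2)) (ht0 : t ≠ 0) (htT1 : t ≠ Fin.last (T + 1))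
    (hᾱt : 0 < ᾱ t ∧ ᾱ t < 1)
    -- the MMSE denoiser E[ε_t | x_t = y]
    (Eps : EuclideanSpace ℝ (Fin d) → EuclideanSpace ℝ (Fin d))
    (hEps : ∀ y, Eps y = (p t y)⁻¹ • ∫ x,
      (((2 * π * (1 - ᾱ t)) ^ (-(d : ℝ) / 2) *
        Real.exp (-‖y - Real.sqrt (ᾱ t) • x‖ ^ 2 / (2 * (1 - ᾱ t)))) * p0 x) •
        ((Real.sqrt (1 - ᾱ t))⁻¹ • (y - Real.sqrt (ᾱ t) • x)))
    (hEps_int : ∀ y, Integrable fun x : EuclideanSpace ℝ (Fin d) =>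
      (((2 * π * (1 - ᾱ t)) ^ (-(d : ℝ) / 2) *
        Real.exp (-‖y - Real.sqrt (ᾱ t) • x‖ ^ 2 / (2 * (1 - ᾱ t)))) * p0 x) •
        ((Real.sqrt (1 - ᾱ t))⁻¹ • (y - Real.sqrt (ᾱ t) • x)))
    -- the classifier-based function F
    (F : EuclideanSpace ℝ (Fin d) → ℝ)
    (hF : ∀ x, F x = Real.log (q (Fin.last (T + 1)) x) - Real.log (q t x)) :
    ∀ y : EuclideanSpace ℝ (Fin d),
      0 < p t y → 0 < ptilde y → DifferentiableAt ℝ ptilde y →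
      Eps y = Real.sqrt (1 - ᾱ t) • (gradient F y + y) :=
  cdm_denoiser_from_classifier_general d T ᾱ p0 hp0_int p hp hpT1 π_ hπ_pos ptilde q hq t ht0 htT1
    hᾱt Eps hEps F hF
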